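/- Let ρ > 0, x₀ ∈ ℝ², t₁ > 0, M₀ > 0, and let u be a smooth positive function defined on an open set U ⊆ ℝ² containing the closed ball of radius 2ρ about x₀, at time t₁, satisfying Δ(log u)(x,t₁) ≤ u(x,t₁)/t₁ on U and u(x,t₁) ≤ M₀ for all x ∈ B_{2ρ}(x₀). Then for every y₀ ∈ B_ρ(x₀): log(M₀/u(y₀,t₁)) ≤ 4 · (π(2ρ)²)⁻¹ ∫_{B_{2ρ}(x₀)} log(M₀/u(x,t₁)) dλ(x) + ρ²M₀/(8t₁). -/

import Mathlib

open MeasureTheory Real Set Filter Topology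
open scoped ENNReal
open scoped ContDiff

noncomputable section

/-- The Euclidean norm on `ℝ × ℝ`. -/
def enorm2 (p : ℝ × ℝ) : ℝ := Real.sqrt (p.1 ^ 2 + p.2 ^ 2)

/-- The open Euclidean ball in `ℝ × ℝ` of radius `r` centred at `c`. -/
def eball (c : ℝ × ℝ) (r : ℝ) : Set (ℝ × ℝ) := {p | enorm2 (p - c) < r}

/-- The closed Euclidean ball in `ℝ × ℝ` of radius `r` centred at `c`. -/
def ecball (c : ℝ × ℝ) (r : ℝ) : Set (ℝ × ℝ) := {p | enorm2 (p - c) ≤ r}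

/-- The Euclidean Laplacian on `ℝ × ℝ`, as the sum of the two iterated second
partial derivatives. -/
def lap (f : ℝ × ℝ → ℝ) (p : ℝ × ℝ) : ℝ :=
  deriv (deriv fun x => f (x, p.2)) p.1 + deriv (deriv fun y => f (p.1, y)) p.2

/-- The logarithmic fast diffusion equation `∂u/∂t = Δ (log u)` (conformal Ricci flow)
on `Ω × I`, where the time derivative is taken within the time interval `I`. -/
def RicciFlowEqOn (u : ℝ × ℝ → ℝ → ℝ) (Ω : Set (ℝ × ℝ)) (I : Set ℝ) : Prop :=
  ∀ x ∈ Ω, ∀ t ∈ I, derivWithin (u x) I t = lap (fun q => Real.log (u q t)) x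






lemma enorm2_eq_abs (p : ℝ × ℝ) : enorm2 p = ‖(⟨p.1, p.2⟩ : ℂ)‖ := by
  rw [Complex.norm_def, Complex.normSq_apply]
  simp [enorm2, sq]

lemma enorm2_nonneg (p : ℝ × ℝ) : 0 ≤ enorm2 p := Real.sqrt_nonneg _

lemma enorm2_triangle (p q : ℝ × ℝ) : enorm2 (p + q) ≤ enorm2 p + enorm2 q := by
  simp only [enorm2_eq_abs]
  have := norm_add_le (⟨p.1, p.2⟩ : ℂ) ⟨q.1, q.2⟩
  exact this

lemma continuous_enorm2 : Continuous enorm2 := by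
  unfold enorm2; fun_prop

lemma isOpen_eball (c : ℝ × ℝ) (r : ℝ) : IsOpen (eball c r) :=
  isOpen_lt (continuous_enorm2.comp (continuous_id.sub continuous_const)) continuous_const

lemma isClosed_ecball (c : ℝ × ℝ) (r : ℝ) : IsClosed (ecball c r) :=
  isClosed_le (continuous_enorm2.comp (continuous_id.sub continuous_const)) continuous_const

lemma measurableSet_eball' (c : ℝ × ℝ) (r : ℝ) : MeasurableSet (eball c r) :=
  (isOpen_eball c r).measurableSet

lemma eball_subset_ecball (c : ℝ × ℝ) (r : ℝ) : eball c r ⊆ ecball c r :=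
  fun _ h => le_of_lt (show enorm2 _ < _ from h)

lemma isCompact_ecball (c : ℝ × ℝ) (r : ℝ) : IsCompact (ecball c r) := by
  refine (isCompact_closedBall c r).of_isClosed_subset (isClosed_ecball c r) ?_
  intro p hp
  have h1 : |(p - c).1| ≤ enorm2 (p - c) := by
    rw [enorm2, ← Real.sqrt_sq_eq_abs]
    exact Real.sqrt_le_sqrt (by nlinarith [sq_nonneg (p - c).2])
  have h2 : |(p - c).2| ≤ enorm2 (p - c) := by
    rw [enorm2, ← Real.sqrt_sq_eq_abs]
    exact Real.sqrt_le_sqrt (by nlinarith [sq_nonneg (p - c).1])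
  have := hp
  simp only [ecball, mem_setOf_eq] at this
  rw [Metric.mem_closedBall, dist_eq_norm, Prod.norm_def]
  exact max_le (h1.trans this) (h2.trans this)

lemma ecball_subset_eball_trans {y₀ x₀ : ℝ × ℝ} {a b : ℝ}
    (h : enorm2 (y₀ - x₀) + a < b) : ecball y₀ a ⊆ eball x₀ b := by
  intro p hp
  have := enorm2_triangle (p - y₀) (y₀ - x₀)
  simp only [sub_add_sub_cancel] at this
  simp only [ecball, mem_setOf_eq] at hp
  simp only [eball, mem_setOf_eq]
  linarith

-- chain rule along a curve
lemma hasDerivAt_comp_curve {h : ℝ × ℝ → ℝ} (hh : ContDiff ℝ ∞ h)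
    {γ : ℝ → ℝ × ℝ} {v : ℝ × ℝ} {t : ℝ} (hγ : HasDerivAt γ v t) :
    HasDerivAt (fun s => h (γ s)) (fderiv ℝ h (γ t) v) t :=
  ((hh.differentiable (by simp) _).hasFDerivAt).comp_hasDerivAt t hγ

lemma contDiff_fderiv {h : ℝ × ℝ → ℝ} (hh : ContDiff ℝ ∞ h) :
    ContDiff ℝ ∞ (fderiv ℝ h) := hh.fderiv_right (by norm_num)

lemma hasDerivAt_comp_curve_fderiv {h : ℝ × ℝ → ℝ} (hh : ContDiff ℝ ∞ h)
    {γ : ℝ → ℝ × ℝ} {v : ℝ × ℝ} {t : ℝ} (hγ : HasDerivAt γ v t)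
    {w : ℝ → ℝ × ℝ} {w' : ℝ × ℝ} (hw : HasDerivAt w w' t) :
    HasDerivAt (fun s => fderiv ℝ h (γ s) (w s))
      ((fderiv ℝ (fderiv ℝ h) (γ t) v) (w t) + (fderiv ℝ h (γ t)) w') t := by
  have h1 : HasDerivAt (fun s => fderiv ℝ h (γ s)) (fderiv ℝ (fderiv ℝ h) (γ t) v) t :=
    (((contDiff_fderiv hh).differentiable (by simp) _).hasFDerivAt).comp_hasDerivAt t hγ
  exact h1.clm_apply hw

lemma lap_eq_fderiv2 {h : ℝ × ℝ → ℝ} (hh : ContDiff ℝ ∞ h) (x : ℝ × ℝ) :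
    lap h x = fderiv ℝ (fderiv ℝ h) x (1, 0) (1, 0) + fderiv ℝ (fderiv ℝ h) x (0, 1) (0, 1) := by
  have l1 : ∀ y : ℝ, ∀ s : ℝ, HasDerivAt (fun s : ℝ => (s, y)) ((1 : ℝ), (0 : ℝ)) s :=
    fun y s => (hasDerivAt_id s).prodMk (hasDerivAt_const s y)
  have l2 : ∀ x' : ℝ, ∀ s : ℝ, HasDerivAt (fun s : ℝ => (x', s)) ((0 : ℝ), (1 : ℝ)) s :=
    fun x' s => (hasDerivAt_const s x').prodMk (hasDerivAt_id s)
  have d1 : (deriv fun s => h (s, x.2)) = fun s => fderiv ℝ h (s, x.2) (1, 0) := by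
    funext s; exact (hasDerivAt_comp_curve hh (l1 x.2 s)).deriv
  have d2 : (deriv fun s => h (x.1, s)) = fun s => fderiv ℝ h (x.1, s) (0, 1) := by
    funext s; exact (hasDerivAt_comp_curve hh (l2 x.1 s)).deriv
  have e1 : deriv (deriv fun s => h (s, x.2)) x.1
      = fderiv ℝ (fderiv ℝ h) x (1, 0) (1, 0) := by
    rw [d1]
    have := hasDerivAt_comp_curve_fderiv hh (l1 x.2 x.1) (hasDerivAt_const x.1 ((1:ℝ), (0:ℝ)))
    simpa using this.deriv
  have e2 : deriv (deriv fun s => h (x.1, s)) x.2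
      = fderiv ℝ (fderiv ℝ h) x (0, 1) (0, 1) := by
    rw [d2]
    have := hasDerivAt_comp_curve_fderiv hh (l2 x.1 x.2) (hasDerivAt_const x.2 ((0:ℝ), (1:ℝ)))
    simpa using this.deriv
  rw [lap, e1, e2]

lemma lap_congr {f g : ℝ × ℝ → ℝ} {x : ℝ × ℝ} (hfg : f =ᶠ[nhds x] g) :
    lap f x = lap g x := by
  have t1 : Tendsto (fun s : ℝ => (s, x.2)) (nhds x.1) (nhds x) := by
    rw [← @Prod.mk.eta _ _ x]
    exact (continuous_id.prodMk continuous_const).tendsto x.1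
  have t2 : Tendsto (fun s : ℝ => (x.1, s)) (nhds x.2) (nhds x) := by
    rw [← @Prod.mk.eta _ _ x]
    exact (continuous_const.prodMk continuous_id).tendsto x.2
  have s1 : (fun s => f (s, x.2)) =ᶠ[nhds x.1] fun s => g (s, x.2) := hfg.comp_tendsto t1
  have s2 : (fun s => f (x.1, s)) =ᶠ[nhds x.2] fun s => g (x.1, s) := hfg.comp_tendsto t2
  rw [lap, lap, s1.deriv.deriv_eq, s2.deriv.deriv_eq]

lemma lap_const_sub (c : ℝ) (u : ℝ × ℝ → ℝ) (x : ℝ × ℝ) :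
    lap (fun p => c - u p) x = -lap u x := by
  have A : ∀ v : ℝ → ℝ, (deriv fun s => c - v s) = fun s => -deriv v s := by
    intro v; funext s; exact deriv_const_sub c
  rw [lap, lap, A, A]
  have B : ∀ v : ℝ → ℝ, ∀ s, deriv (fun s => -v s) s = -deriv v s := fun v s => deriv.neg
  rw [B, B]; ring

-- smoothness of horizontal section on slice
lemma sec1_smooth {f : ℝ × ℝ → ℝ} {S : Set (ℝ × ℝ)} (hf : ContDiffOn ℝ ∞ f S)
    (y : ℝ) : ContDiffOn ℝ ∞ (fun s => f (s, y)) {s | (s, y) ∈ S} := by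
  have : ContDiff ℝ ∞ (fun s : ℝ => (s, y)) := contDiff_id.prodMk contDiff_const
  exact hf.comp this.contDiffOn (fun s hs => hs)

lemma sec2_smooth {f : ℝ × ℝ → ℝ} {S : Set (ℝ × ℝ)} (hf : ContDiffOn ℝ ∞ f S)
    (x : ℝ) : ContDiffOn ℝ ∞ (fun s => f (x, s)) {s | (x, s) ∈ S} := by
  have : ContDiff ℝ ∞ (fun s : ℝ => (x, s)) := contDiff_const.prodMk contDiff_id
  exact hf.comp this.contDiffOn (fun s hs => hs)

-- second derivative of sum of two functions, each smooth on an open set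
lemma deriv2_add {u v : ℝ → ℝ} {T : Set ℝ} (hT : IsOpen T) {t : ℝ} (ht : t ∈ T)
    (hu : ContDiffOn ℝ ∞ u T) (hv : ContDiffOn ℝ ∞ v T) :
    deriv (deriv fun s => u s + v s) t = deriv (deriv u) t + deriv (deriv v) t := by
  have hu1 : ∀ s ∈ T, DifferentiableAt ℝ u s := fun s hs =>
    (hu.contDiffAt (hT.mem_nhds hs)).differentiableAt (by simp)
  have hv1 : ∀ s ∈ T, DifferentiableAt ℝ v s := fun s hs =>
    (hv.contDiffAt (hT.mem_nhds hs)).differentiableAt (by simp)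
  have e1 : (deriv fun s => u s + v s) =ᶠ[nhds t] fun s => deriv u s + deriv v s := by
    filter_upwards [hT.mem_nhds ht] with s hs
    exact deriv_fun_add (hu1 s hs) (hv1 s hs)
  rw [e1.deriv_eq]
  have hud : DifferentiableAt ℝ (deriv u) t := by
    have := (hu.deriv_of_isOpen (m := ∞) hT (by norm_num)).contDiffAt (hT.mem_nhds ht)
    exact this.differentiableAt (by simp)
  have hvd : DifferentiableAt ℝ (deriv v) t := by
    have := (hv.deriv_of_isOpen (m := ∞) hT (by norm_num)).contDiffAt (hT.mem_nhds ht)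
    exact this.differentiableAt (by simp)
  exact deriv_fun_add hud hvd

lemma lap_add {f g : ℝ × ℝ → ℝ} {S : Set (ℝ × ℝ)} (hS : IsOpen S)
    (hf : ContDiffOn ℝ ∞ f S) (hg : ContDiffOn ℝ ∞ g S) {x : ℝ × ℝ} (hx : x ∈ S) :
    lap (fun p => f p + g p) x = lap f x + lap g x := by
  have o1 : IsOpen {s | (s, x.2) ∈ S} := hS.preimage (continuous_id.prodMk continuous_const)
  have o2 : IsOpen {s | (x.1, s) ∈ S} := hS.preimage (continuous_const.prodMk continuous_id)
  have m1 : x.1 ∈ {s | (s, x.2) ∈ S} := by simpa using hx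
  have m2 : x.2 ∈ {s | (x.1, s) ∈ S} := by simpa using hx
  rw [lap, lap, lap,
    deriv2_add o1 m1 (sec1_smooth hf x.2) (sec1_smooth hg x.2),
    deriv2_add o2 m2 (sec2_smooth hf x.1) (sec2_smooth hg x.1)]
  ring

lemma lap_quad (C a b : ℝ) (x : ℝ × ℝ) :
    lap (fun p => C * ((p.1 - a) ^ 2 + (p.2 - b) ^ 2)) x = 4 * C := by
  have key : ∀ (d K : ℝ), deriv (deriv fun s : ℝ => C * ((s - d) ^ 2 + K)) = fun _ => 2 * C := by
    intro d K
    have d1 : (deriv fun s : ℝ => C * ((s - d) ^ 2 + K)) = fun s => C * (2 * (s - d)) := by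
      funext s
      have : HasDerivAt (fun s : ℝ => C * ((s - d) ^ 2 + K)) (C * (2 * (s - d))) s := by
        have h1 : HasDerivAt (fun s : ℝ => s - d) 1 s := (hasDerivAt_id s).sub_const d
        have h2 : HasDerivAt (fun s : ℝ => (s - d) ^ 2) (2 * (s - d) ^ 1 * 1) s := h1.pow 2
        have h3 := (h2.add_const K).const_mul C
        simpa using h3
      exact this.deriv
    rw [d1]
    funext s
    have : HasDerivAt (fun s : ℝ => C * (2 * (s - d))) (2 * C) s := by
      have h1 : HasDerivAt (fun s : ℝ => s - d) 1 s := (hasDerivAt_id s).sub_const d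
      have := (h1.const_mul 2).const_mul C
      simpa [mul_comm] using this
    exact this.deriv
  rw [lap]
  have e1 : (fun s : ℝ => C * ((s - a) ^ 2 + (x.2 - b) ^ 2)) =
      fun s : ℝ => C * ((s - a) ^ 2 + ((x.2 - b) ^ 2)) := rfl
  have e2 : (fun s : ℝ => C * ((x.1 - a) ^ 2 + (s - b) ^ 2)) =
      fun s : ℝ => C * ((s - b) ^ 2 + ((x.1 - a) ^ 2)) := by funext s; ring_nf
  rw [e1, e2, key, key]; ring

lemma enorm2_polar (r θ : ℝ) : enorm2 (r * cos θ, r * sin θ) = |r| := by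
  rw [enorm2]
  have : (r * cos θ) ^ 2 + (r * sin θ) ^ 2 = r ^ 2 := by
    have := sin_sq_add_cos_sq θ; nlinarith
  rw [this, sqrt_sq_eq_abs]

lemma polar_integral {h : ℝ × ℝ → ℝ} (hc : Continuous h) (c : ℝ × ℝ) {R : ℝ} (hR : 0 < R) :
    (∫ x in eball c R, h x
      = ∫ r in Ioo (0 : ℝ) R, r * ∫ θ in Ioo (-π) π, h (c + r • (cos θ, sin θ)))
    ∧ IntegrableOn (fun r => r * ∫ θ in Ioo (-π) π, h (c + r • (cos θ, sin θ)))
        (Ioo (0:ℝ) R) := by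
  obtain ⟨C, hC⟩ := (isCompact_ecball c R).exists_bound_of_continuousOn hc.continuousOn
  set f : ℝ × ℝ → ℝ := (eball 0 R).indicator (fun q => h (c + q)) with hf
  have hmeas_f : Measurable f :=
    ((hc.comp (continuous_const.add continuous_id)).measurable).indicator
      (isOpen_eball 0 R).measurableSet
  -- step 1 : ∫ p, f p = ∫ x in eball c R, h x
  have step1 : ∫ p, f p = ∫ x in eball c R, h x := by
    have key : ∀ p, f p = (eball c R).indicator h (c + p) := by
      intro p
      have hmem : p ∈ eball 0 R ↔ c + p ∈ eball c R := by
        simp [eball, enorm2]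
      by_cases hp : p ∈ eball 0 R
      · rw [hf, indicator_of_mem hp, indicator_of_mem (hmem.1 hp)]
      · rw [hf, indicator_of_notMem hp, indicator_of_notMem (fun hh => hp (hmem.2 hh))]
    calc ∫ p, f p = ∫ p, (eball c R).indicator h (c + p) := by simp_rw [key]
    _ = ∫ p, (eball c R).indicator h p := by
          exact integral_add_left_eq_self (μ := (volume : Measure (ℝ × ℝ))) ((eball c R).indicator h) c
    _ = ∫ x in eball c R, h x := integral_indicator (isOpen_eball c R).measurableSet
  -- step 2: polar change of variables
  have step2 : (∫ p in polarCoord.target, p.1 • f (polarCoord.symm p)) = ∫ p, f p :=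
    integral_comp_polarCoord_symm f
  -- integrability of the polar integrand on the target
  have hbound : ∀ p : ℝ × ℝ, p.1 ∈ Ioi (0:ℝ) →
      ‖p.1 • f (polarCoord.symm p)‖ ≤ (Icc (0:ℝ) R).indicator (fun _ => R * |C|) p.1 := by
    intro p hp
    have hp0 : (0:ℝ) < p.1 := hp
    by_cases hR' : p.1 < R
    · rw [indicator_of_mem (mem_Icc.2 ⟨by linarith, by linarith⟩)]
      have : ‖f (polarCoord.symm p)‖ ≤ |C| := by
        by_cases hmem : polarCoord.symm p ∈ eball 0 R
        · rw [hf, indicator_of_mem hmem]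
          have : c + polarCoord.symm p ∈ ecball c R := by
            have := hmem
            simp only [eball, mem_setOf_eq, sub_zero] at this
            simp only [ecball, mem_setOf_eq, add_sub_cancel_left]
            exact this.le
          exact (hC _ this).trans (le_abs_self C)
        · rw [hf, indicator_of_notMem hmem]; simp [abs_nonneg]
      calc ‖p.1 • f (polarCoord.symm p)‖ = |p.1| * ‖f (polarCoord.symm p)‖ := by
            simp [abs_mul, norm_smul]
      _ ≤ R * |C| := by
            apply mul_le_mul (by rw [abs_of_pos hp0]; linarith) this (norm_nonneg _)
              (by linarith)
    · have : polarCoord.symm p ∉ eball 0 R := by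
        simp only [eball, mem_setOf_eq, sub_zero, not_lt, polarCoord_symm_apply]
        rw [enorm2_polar, abs_of_pos hp0]; linarith
      rw [hf]
      rw [indicator_of_notMem this]
      simp only [smul_zero, norm_zero]
      exact indicator_nonneg (fun _ _ => by positivity) _
  have hcont_symm : Continuous (polarCoord.symm : ℝ × ℝ → ℝ × ℝ) := by
    have : (polarCoord.symm : ℝ × ℝ → ℝ × ℝ) = fun p => (p.1 * cos p.2, p.1 * sin p.2) :=
      funext fun p => polarCoord_symm_apply p
    rw [this]; fun_prop
  set g : ℝ × ℝ → ℝ := ((Icc (0:ℝ) R) ×ˢ (Icc (-π) π)).indicator (fun _ => R * |C|) with hg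
  have hg_int : Integrable g := by
    rw [hg, integrable_indicator_iff (measurableSet_Icc.prod measurableSet_Icc)]
    refine integrableOn_const ?_
    exact (isCompact_Icc.prod isCompact_Icc).measure_lt_top.ne
  have hint : IntegrableOn (fun p : ℝ × ℝ => p.1 • f (polarCoord.symm p))
      (Ioi (0:ℝ) ×ˢ Ioo (-π) π) := by
    have hmeasF : Measurable fun p : ℝ × ℝ => p.1 • f (polarCoord.symm p) :=
      Measurable.smul measurable_fst (hmeas_f.comp hcont_symm.measurable)
    refine Integrable.mono' (hg_int.restrict) hmeasF.aestronglyMeasurable ?_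
    rw [ae_restrict_iff' ((measurableSet_Ioi).prod measurableSet_Ioo)]
    filter_upwards with p hp
    refine (hbound p hp.1).trans ?_
    by_cases h1 : p.1 ∈ Icc (0:ℝ) R
    · rw [indicator_of_mem h1]
      rw [hg, indicator_of_mem (Set.mem_prod.2 ⟨h1, mem_Icc.2 ⟨hp.2.1.le, hp.2.2.le⟩⟩)]
    · rw [indicator_of_notMem h1]
      exact indicator_nonneg (fun _ _ => by positivity) _
  -- step 3 : iterated integral
  have htarget : polarCoord.target = Ioi (0:ℝ) ×ˢ Ioo (-π) π := rfl
  have step3 : (∫ p in polarCoord.target, p.1 • f (polarCoord.symm p))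
      = ∫ r in Ioi (0:ℝ), ∫ θ in Ioo (-π) π, r • f (polarCoord.symm (r, θ)) := by
    rw [htarget]
    rw [Measure.volume_eq_prod]
    exact setIntegral_prod _ (by rwa [Measure.volume_eq_prod] at hint)
  -- step 4 : inner integral evaluation
  have step4 : ∀ r ∈ Ioi (0:ℝ),
      (∫ θ in Ioo (-π) π, r • f (polarCoord.symm (r, θ)))
        = (Ioo (0:ℝ) R).indicator (fun r => r * ∫ θ in Ioo (-π) π, h (c + r • (cos θ, sin θ))) r := by
    intro r hr
    have hr0 : (0:ℝ) < r := hr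
    by_cases hrR : r < R
    · rw [indicator_of_mem (mem_Ioo.2 ⟨hr0, hrR⟩)]
      rw [← integral_const_mul]
      apply setIntegral_congr_fun measurableSet_Ioo
      intro θ _
      have hmem : (polarCoord.symm (r, θ)) ∈ eball 0 R := by
        simp only [eball, mem_setOf_eq, sub_zero, polarCoord_symm_apply]
        rw [enorm2_polar, abs_of_pos hr0]; exact hrR
      have hfe : f (polarCoord.symm (r, θ)) = h (c + r • (cos θ, sin θ)) := by
        have hsm : r • ((cos θ, sin θ) : ℝ × ℝ) = (r * cos θ, r * sin θ) := by
          simp [Prod.smul_mk, smul_eq_mul]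
        rw [hf, indicator_of_mem hmem, polarCoord_symm_apply, hsm]
      show r • f (polarCoord.symm (r, θ)) = r * h (c + r • (cos θ, sin θ))
      rw [hfe, smul_eq_mul]
    · rw [indicator_of_notMem (fun hmem => hrR hmem.2)]
      have : ∀ θ ∈ Ioo (-π) π, r • f (polarCoord.symm (r, θ)) = 0 := by
        intro θ _
        have : (polarCoord.symm (r, θ)) ∉ eball 0 R := by
          simp only [eball, mem_setOf_eq, sub_zero, polarCoord_symm_apply, not_lt]
          rw [enorm2_polar, abs_of_pos hr0]; linarith
        rw [hf, indicator_of_notMem this, smul_zero]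
      rw [setIntegral_congr_fun measurableSet_Ioo this]
      simp
  constructor
  · rw [← step1, ← step2, step3,
      setIntegral_congr_fun measurableSet_Ioi step4,
      setIntegral_indicator measurableSet_Ioo,
      inter_eq_right.2 (fun x hx => hx.1)]
  · -- integrability of the radial profile
    have hint2 : Integrable (fun p : ℝ × ℝ => p.1 • f (polarCoord.symm p))
        ((volume.restrict (Ioi (0:ℝ))).prod (volume.restrict (Ioo (-π) π))) := by
      rw [Measure.prod_restrict]
      rwa [Measure.volume_eq_prod] at hint
    have J := hint2.integral_prod_left
    have J' : IntegrableOn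
        (fun r : ℝ => ∫ θ in Ioo (-π) π, r • f (polarCoord.symm (r, θ))) (Ioi (0:ℝ)) := J
    have J'' := J'.mono_set (Ioo_subset_Ioi_self : Ioo (0:ℝ) R ⊆ Ioi 0)
    apply J''.congr_fun ?_ measurableSet_Ioo
    intro r hr
    have h4 := step4 r (Ioo_subset_Ioi_self hr)
    show (∫ (θ : ℝ) in Ioo (-π) π, r • f (polarCoord.symm (r, θ)))
        = r * ∫ (θ : ℝ) in Ioo (-π) π, h (c + r • (cos θ, sin θ))
    rw [h4, indicator_of_mem hr]

lemma swap_Ioc {G : ℝ → ℝ → ℝ} (hc : Continuous fun p : ℝ × ℝ => G p.1 p.2)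
    {a b u v : ℝ} :
    ∫ θ in Ioc a b, (∫ t in Ioc u v, G t θ) = ∫ t in Ioc u v, ∫ θ in Ioc a b, G t θ := by
  have hint : Integrable (Function.uncurry fun θ t => G t θ)
      ((volume.restrict (Ioc a b)).prod (volume.restrict (Ioc u v))) := by
    rw [Measure.prod_restrict]
    have hcont : Continuous (Function.uncurry fun θ t : ℝ => G t θ) :=
      hc.comp (continuous_snd.prodMk continuous_fst)
    exact (hcont.continuousOn.integrableOn_compact
      (isCompact_Icc.prod isCompact_Icc)).mono_set
      (Set.prod_mono Ioc_subset_Icc_self Ioc_subset_Icc_self)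
  exact MeasureTheory.integral_integral_swap hint

section Submean

variable {H : ℝ × ℝ → ℝ}

lemma submean (hH : ContDiff ℝ ∞ H) (c : ℝ × ℝ) {R : ℝ} (hR : 0 < R)
    (hlap : ∀ x ∈ ecball c R, 0 ≤ lap H x) :
    π * R ^ 2 * H c ≤ ∫ x in eball c R, H x := by
  set D := fderiv ℝ H with hD
  set D2 := fderiv ℝ (fderiv ℝ H) with hD2
  set e : ℝ → ℝ × ℝ := fun θ => (cos θ, sin θ) with he
  set e' : ℝ → ℝ × ℝ := fun θ => (-sin θ, cos θ) with he'
  set γ : ℝ → ℝ → ℝ × ℝ := fun r θ => c + r • e θ with hγdef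
  -- continuity
  have hHc : Continuous H := hH.continuous
  have hDc : Continuous D := (contDiff_fderiv hH).continuous
  have hD2c : Continuous D2 := ((contDiff_fderiv hH).fderiv_right (m := 0) (by norm_num)).continuous
  have hec : Continuous e := by rw [he]; fun_prop
  have he'c : Continuous e' := by rw [he']; fun_prop
  have hγc : Continuous fun p : ℝ × ℝ => γ p.1 p.2 := by
    rw [hγdef]; exact continuous_const.add (continuous_fst.smul (hec.comp continuous_snd))
  have hγc1 : ∀ θ, Continuous fun r => γ r θ :=
    fun θ => hγc.comp (continuous_id.prodMk continuous_const)
  have hγc2 : ∀ r, Continuous fun θ => γ r θ :=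
    fun r => hγc.comp (continuous_const.prodMk continuous_id)
  -- membership
  have hmem : ∀ r θ, |r| ≤ R → γ r θ ∈ ecball c R := by
    intro r θ hr
    show enorm2 (c + r • e θ - c) ≤ R
    have : c + r • e θ - c = (r * cos θ, r * sin θ) := by
      rw [he]; ext <;> simp [Prod.smul_mk, smul_eq_mul]
    rw [this, enorm2_polar]; exact hr
  -- derivative of radial curve
  have hline : ∀ (r θ : ℝ), HasDerivAt (fun t : ℝ => γ t θ) (e θ) r := by
    intro r θ
    rw [hγdef]
    simpa using (((hasDerivAt_id r).smul_const (e θ)).const_add c)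
  have hrad : ∀ r θ, HasDerivAt (fun t => H (γ t θ)) (D (γ r θ) (e θ)) r :=
    fun r θ => hasDerivAt_comp_curve hH (hline r θ)
  have hradD : ∀ r θ, HasDerivAt (fun t => t * D (γ t θ) (e θ))
      (D (γ r θ) (e θ) + r * (D2 (γ r θ) (e θ) (e θ))) r := by
    intro r θ
    have h1 : HasDerivAt (fun t => D (γ t θ) (e θ)) (D2 (γ r θ) (e θ) (e θ)) r := by
      have := hasDerivAt_comp_curve_fderiv hH (hline r θ) (hasDerivAt_const r (e θ))
      simpa using this
    simpa using (hasDerivAt_id' r).fun_mul h1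
  -- derivative of angular curve
  have hang : ∀ (r θ : ℝ), HasDerivAt (fun θ => γ r θ) (r • e' θ) θ := by
    intro r θ
    rw [hγdef, he, he']
    exact (((Real.hasDerivAt_cos θ).prodMk (Real.hasDerivAt_sin θ)).const_smul r).const_add c
  have hang' : ∀ (r θ : ℝ), HasDerivAt e' (-(e θ)) θ := by
    intro r θ
    rw [he, he']
    have := ((Real.hasDerivAt_sin θ).neg.prodMk (Real.hasDerivAt_cos θ))
    simpa [Prod.neg_mk] using this
  have hθ2 : ∀ r θ, HasDerivAt (fun θ => D (γ r θ) (r • e' θ))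
      ((D2 (γ r θ) (r • e' θ)) (r • e' θ) + (D (γ r θ)) (r • (-(e θ)))) θ := by
    intro r θ
    exact hasDerivAt_comp_curve_fderiv hH (hang r θ) ((hang' r θ).const_smul r)
  -- scalar simplifications
  have sA2 : ∀ (x : ℝ × ℝ) (r : ℝ) (v w : ℝ × ℝ),
      (D2 x) (r • v) (r • w) = r ^ 2 * (D2 x v w) := by
    intro x r v w
    simp only [_root_.map_smul, ContinuousLinearMap.smul_apply, smul_eq_mul]
    ring
  have sA1 : ∀ (x : ℝ × ℝ) (r : ℝ) (v : ℝ × ℝ), (D x) (r • -v) = -(r * D x v) := by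
    intro x r v
    simp only [_root_.map_smul, map_neg, smul_eq_mul]
    ring
  -- lap in rotated frame
  have hlapdir : ∀ (x : ℝ × ℝ) (θ : ℝ),
      D2 x (e θ) (e θ) + D2 x (e' θ) (e' θ) = lap H x := by
    intro x θ
    have h1 : e θ = cos θ • ((1:ℝ), (0:ℝ)) + sin θ • ((0:ℝ), (1:ℝ)) := by
      rw [he]; ext <;> simp
    have h2 : e' θ = (-sin θ) • ((1:ℝ), (0:ℝ)) + cos θ • ((0:ℝ), (1:ℝ)) := by
      rw [he']; ext <;> simp
    rw [lap_eq_fderiv2 hH, ← hD2, h1, h2]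
    simp only [map_add, _root_.map_smul, ContinuousLinearMap.add_apply,
      ContinuousLinearMap.smul_apply, smul_eq_mul]
    linear_combination (sin_sq_add_cos_sq θ) * (((D2 x) (1, 0)) (1, 0) + ((D2 x) (0, 1)) (0, 1))
  -- continuity of the various integrands
  have cA1 : Continuous fun p : ℝ × ℝ => D (γ p.1 p.2) (e p.2) :=
    (hDc.comp hγc).clm_apply (hec.comp continuous_snd)
  have cB2 : Continuous fun p : ℝ × ℝ => (D2 (γ p.1 p.2)) (e p.2) (e p.2) :=
    ((hD2c.comp hγc).clm_apply (hec.comp continuous_snd)).clm_apply (hec.comp continuous_snd)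
  have cA2 : Continuous fun p : ℝ × ℝ => (D2 (γ p.1 p.2)) (e' p.2) (e' p.2) :=
    ((hD2c.comp hγc).clm_apply (he'c.comp continuous_snd)).clm_apply (he'c.comp continuous_snd)
  -- (A) : the angular FTC identity
  have hA : ∀ r : ℝ, (∫ θ in (-π)..π, (r^2 * (D2 (γ r θ) (e' θ) (e' θ)) - r * (D (γ r θ) (e θ))))
      = 0 := by
    intro r
    have key : ∀ θ ∈ uIcc (-π) π, HasDerivAt (fun θ => D (γ r θ) (r • e' θ))
        (r^2 * (D2 (γ r θ) (e' θ) (e' θ)) - r * (D (γ r θ) (e θ))) θ := by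
      intro θ _
      have := hθ2 r θ
      have heq : (D2 (γ r θ) (r • e' θ)) (r • e' θ) + (D (γ r θ)) (r • (-(e θ)))
          = r^2 * (D2 (γ r θ) (e' θ) (e' θ)) - r * (D (γ r θ) (e θ)) := by
        rw [sA2, sA1]; ring
      rwa [heq] at this
    have hint : IntervalIntegrable
        (fun θ => r^2 * (D2 (γ r θ) (e' θ) (e' θ)) - r * (D (γ r θ) (e θ))) volume (-π) π := by
      apply Continuous.intervalIntegrable
      have c1 : Continuous fun θ => (D2 (γ r θ) (e' θ)) (e' θ) :=
        cA2.comp (continuous_const.prodMk continuous_id)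
      have c2 : Continuous fun θ => (D (γ r θ)) (e θ) :=
        cA1.comp (continuous_const.prodMk continuous_id)
      exact (continuous_const.mul c1).sub (continuous_const.mul c2)
    rw [intervalIntegral.integral_eq_sub_of_hasDerivAt key hint]
    have hper : γ r (-π) = γ r π := by
      rw [hγdef, he]; simp
    have hper' : e' (-π) = e' π := by rw [he']; simp
    rw [hper, hper']
    ring
  -- (B) radial FTC
  have hB : ∀ (s θ : ℝ), s * (D (γ s θ)) (e θ)
      = ∫ t in (0:ℝ)..s, ((D (γ t θ)) (e θ) + t * (D2 (γ t θ)) (e θ) (e θ)) := by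
    intro s θ
    have key : ∀ t ∈ uIcc (0:ℝ) s, HasDerivAt (fun t => t * (D (γ t θ)) (e θ))
        ((D (γ t θ)) (e θ) + t * (D2 (γ t θ)) (e θ) (e θ)) t := fun t _ => hradD t θ
    have hint : IntervalIntegrable (fun t => (D (γ t θ)) (e θ) + t * (D2 (γ t θ)) (e θ) (e θ))
        volume 0 s := by
      apply Continuous.intervalIntegrable
      have c1 : Continuous fun t => (D (γ t θ)) (e θ) :=
        cA1.comp (continuous_id.prodMk continuous_const)
      have c2 : Continuous fun t => (D2 (γ t θ)) (e θ) (e θ) :=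
        cB2.comp (continuous_id.prodMk continuous_const)
      exact c1.add (continuous_id.mul c2)
    rw [intervalIntegral.integral_eq_sub_of_hasDerivAt key hint]
    simp
  -- nonnegativity of F
  have hFnn : ∀ s : ℝ, 0 < s → s ≤ R → 0 ≤ ∫ θ in (-π)..π, (D (γ s θ)) (e θ) := by
    intro s hs hsR
    have hππ : (-π : ℝ) ≤ π := by linarith [pi_pos]
    have cA1θ : ∀ t : ℝ, Continuous fun θ => (D (γ t θ)) (e θ) :=
      fun t => cA1.comp (continuous_const.prodMk continuous_id)
    have cA2θ : ∀ t : ℝ, Continuous fun θ => (D2 (γ t θ)) (e' θ) (e' θ) :=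
      fun t => cA2.comp (continuous_const.prodMk continuous_id)
    have cB2θ : ∀ t : ℝ, Continuous fun θ => (D2 (γ t θ)) (e θ) (e θ) :=
      fun t => cB2.comp (continuous_const.prodMk continuous_id)
    -- s * F s as a double integral
    have step1 : s * ∫ θ in (-π)..π, (D (γ s θ)) (e θ)
        = ∫ θ in Ioc (-π) π, ∫ t in Ioc (0:ℝ) s,
            ((D (γ t θ)) (e θ) + t * (D2 (γ t θ)) (e θ) (e θ)) := by
      rw [← intervalIntegral.integral_const_mul, intervalIntegral.integral_of_le hππ]
      apply setIntegral_congr_fun measurableSet_Ioc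
      intro θ _
      show s * (D (γ s θ)) (e θ) = ∫ t in Ioc (0:ℝ) s,
          ((D (γ t θ)) (e θ) + t * (D2 (γ t θ)) (e θ) (e θ))
      rw [hB s θ, intervalIntegral.integral_of_le hs.le]
    have step2 : ∫ θ in Ioc (-π) π, ∫ t in Ioc (0:ℝ) s,
          ((D (γ t θ)) (e θ) + t * (D2 (γ t θ)) (e θ) (e θ))
        = ∫ t in Ioc (0:ℝ) s, ∫ θ in Ioc (-π) π,
            ((D (γ t θ)) (e θ) + t * (D2 (γ t θ)) (e θ) (e θ)) := by
      apply swap_Ioc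
      exact cA1.add (continuous_fst.mul cB2)
    have inner_eq : ∀ t ∈ Ioc (0:ℝ) s,
        (∫ θ in Ioc (-π) π, ((D (γ t θ)) (e θ) + t * (D2 (γ t θ)) (e θ) (e θ)))
          = t * ∫ θ in Ioc (-π) π, lap H (γ t θ) := by
      intro t ht
      have i1 : IntegrableOn (fun θ => (D (γ t θ)) (e θ)) (Ioc (-π) π) :=
        ((cA1θ t).continuousOn.integrableOn_compact isCompact_Icc).mono_set Ioc_subset_Icc_self
      have i2 : IntegrableOn (fun θ => (D2 (γ t θ)) (e θ) (e θ)) (Ioc (-π) π) :=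
        ((cB2θ t).continuousOn.integrableOn_compact isCompact_Icc).mono_set Ioc_subset_Icc_self
      have i3 : IntegrableOn (fun θ => (D2 (γ t θ)) (e' θ) (e' θ)) (Ioc (-π) π) :=
        ((cA2θ t).continuousOn.integrableOn_compact isCompact_Icc).mono_set Ioc_subset_Icc_self
      have hAt : (∫ θ in Ioc (-π) π, (D (γ t θ)) (e θ))
          = t * ∫ θ in Ioc (-π) π, (D2 (γ t θ)) (e' θ) (e' θ) := by
        have := hA t
        rw [intervalIntegral.integral_of_le hππ] at this
        rw [integral_sub (i3.const_mul _) (i1.const_mul _)] at this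
        rw [integral_const_mul, integral_const_mul] at this
        have ht0 : t ≠ 0 := ne_of_gt ht.1
        apply mul_left_cancel₀ ht0
        linear_combination -this
      rw [integral_add i1 (i2.const_mul t)]
      rw [hAt, integral_const_mul, ← mul_add, ← integral_add i3 i2]
      congr 1
      apply setIntegral_congr_fun measurableSet_Ioc
      intro θ _
      show (D2 (γ t θ)) (e' θ) (e' θ) + (D2 (γ t θ)) (e θ) (e θ) = lap H (γ t θ)
      rw [← hlapdir (γ t θ) θ]; ring
    have lap_nn : ∀ t ∈ Ioc (0:ℝ) s, 0 ≤ t * ∫ θ in Ioc (-π) π, lap H (γ t θ) := by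
      intro t ht
      apply mul_nonneg ht.1.le
      apply setIntegral_nonneg measurableSet_Ioc
      intro θ _
      exact hlap _ (hmem t θ (by rw [abs_of_pos ht.1]; linarith [ht.2]))
    have : 0 ≤ s * ∫ θ in (-π)..π, (D (γ s θ)) (e θ) := by
      rw [step1, step2]
      apply setIntegral_nonneg measurableSet_Ioc
      intro t ht
      rw [inner_eq t ht]
      exact lap_nn t ht
    exact nonneg_of_mul_nonneg_right this hs
  -- ψ monotone from center
  have hψ : ∀ s : ℝ, 0 < s → s ≤ R →
      2 * π * H c ≤ ∫ θ in (-π)..π, H (γ s θ) := by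
    intro s hs hsR
    have hππ : (-π : ℝ) ≤ π := by linarith [pi_pos]
    have hγ0 : ∀ θ : ℝ, γ 0 θ = c := by intro θ; rw [hγdef]; simp
    have hψ0 : (∫ θ in (-π)..π, H (γ 0 θ)) = 2 * π * H c := by
      simp only [hγ0]
      rw [intervalIntegral.integral_const, smul_eq_mul]
      ring
    have hsub : ∀ θ : ℝ, H (γ s θ) - H (γ 0 θ) = ∫ t in Ioc (0:ℝ) s, (D (γ t θ)) (e θ) := by
      intro θ
      rw [← intervalIntegral.integral_of_le hs.le]
      rw [intervalIntegral.integral_eq_sub_of_hasDerivAt (fun t _ => hrad t θ)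
        ((cA1.comp (continuous_id.prodMk continuous_const)).intervalIntegrable 0 s)]
    have hcont1 : Continuous fun θ => H (γ s θ) := hHc.comp (hγc2 s)
    have hcont0 : Continuous fun θ => H (γ 0 θ) := hHc.comp (hγc2 0)
    have key : (∫ θ in (-π)..π, H (γ s θ)) - ∫ θ in (-π)..π, H (γ 0 θ)
        = ∫ t in Ioc (0:ℝ) s, ∫ θ in Ioc (-π) π, (D (γ t θ)) (e θ) := by
      rw [← intervalIntegral.integral_sub (hcont1.intervalIntegrable _ _)
        (hcont0.intervalIntegrable _ _)]
      rw [intervalIntegral.integral_of_le hππ]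
      rw [setIntegral_congr_fun measurableSet_Ioc (fun θ _ => hsub θ)]
      exact swap_Ioc cA1
    have pos : 0 ≤ ∫ t in Ioc (0:ℝ) s, ∫ θ in Ioc (-π) π, (D (γ t θ)) (e θ) := by
      apply setIntegral_nonneg measurableSet_Ioc
      intro t ht
      have := hFnn t ht.1 (ht.2.trans hsR)
      rwa [intervalIntegral.integral_of_le hππ] at this
    rw [← hψ0]
    linarith [key ▸ pos]
  -- final assembly via polar coordinates
  have hππ : (-π : ℝ) ≤ π := by linarith [pi_pos]
  obtain ⟨hpi, hpint⟩ := polar_integral hHc c hR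
  rw [hpi]
  have hinner : ∀ r : ℝ, (∫ θ in Ioo (-π) π, H (c + r • (cos θ, sin θ)))
      = ∫ θ in (-π)..π, H (γ r θ) := by
    intro r
    rw [← integral_Ioc_eq_integral_Ioo, ← intervalIntegral.integral_of_le hππ]
  have hlow : ∀ r ∈ Ioo (0:ℝ) R,
      2 * π * H c * r ≤ r * ∫ θ in Ioo (-π) π, H (c + r • (cos θ, sin θ)) := by
    intro r hr
    rw [hinner r]
    have := hψ r hr.1 hr.2.le
    have h2 := mul_le_mul_of_nonneg_left this hr.1.le
    linarith [h2]
  have hRint : (∫ r in Ioo (0:ℝ) R, 2 * π * H c * r) = π * R ^ 2 * H c := by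
    simp_rw [mul_comm (2 * π * H c)]
    rw [integral_mul_const]
    rw [← integral_Ioc_eq_integral_Ioo, ← intervalIntegral.integral_of_le hR.le,
      integral_id]
    ring
  rw [← hRint]
  apply setIntegral_mono_on ?_ ?_ measurableSet_Ioo hlow
  · exact ((continuous_const.mul continuous_id).continuousOn.integrableOn_compact
      isCompact_Icc).mono_set Ioo_subset_Icc_self
  · exact hpint


end Submean

/-- A single-time mean-value estimate: under `Δ log u ≤ u/t₁` on `U`
and `u ≤ M₀` on `B_{2ρ}(x₀)`, the value of `log(M₀/u)` at any `y₀ ∈ B_ρ(x₀)` is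
controlled by four times its average over `B_{2ρ}(x₀)` plus `ρ²M₀/(8t₁)`. -/
theorem stmt4 (ρ t₁ M₀ : ℝ) (x₀ : ℝ × ℝ) (U : Set (ℝ × ℝ)) (f : ℝ × ℝ → ℝ)
    (hρ : 0 < ρ) (ht₁ : 0 < t₁) (hM₀ : 0 < M₀)
    (hU : IsOpen U) (hball : ecball x₀ (2 * ρ) ⊆ U)
    (hsmooth : ContDiffOn ℝ (⊤ : ℕ∞) f U) (hpos : ∀ x ∈ U, 0 < f x)
    (hcurv : ∀ x ∈ U, lap (fun q => Real.log (f q)) x ≤ f x / t₁)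
    (hupper : ∀ x ∈ eball x₀ (2 * ρ), f x ≤ M₀) :
    ∀ y₀ ∈ eball x₀ ρ,
      Real.log (M₀ / f y₀) ≤
        4 * ((π * (2 * ρ) ^ 2)⁻¹ * ∫ x in eball x₀ (2 * ρ), Real.log (M₀ / f x))
        + ρ ^ 2 * M₀ / (8 * t₁) := by
  intro y₀ hy₀
  have hVopen : IsOpen (eball x₀ (2 * ρ)) := isOpen_eball _ _
  have hVU : eball x₀ (2 * ρ) ⊆ U := (eball_subset_ecball _ _).trans hball
  have hdρ : enorm2 (y₀ - x₀) < ρ := hy₀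
  have hd0 : 0 ≤ enorm2 (y₀ - x₀) := enorm2_nonneg _
  set d : ℝ := enorm2 (y₀ - x₀) with hd
  set R₂ : ℝ := ρ + (ρ - d) / 3 with hR₂
  set R₃ : ℝ := ρ + (ρ - d) / 2 with hR₃
  have hρR₂ : ρ < R₂ := by rw [hR₂]; linarith
  have hR₂R₃ : R₂ < R₃ := by rw [hR₂, hR₃]; linarith
  have hR₂0 : 0 < R₂ := by linarith
  have hsubV : ecball y₀ R₃ ⊆ eball x₀ (2 * ρ) := by
    apply ecball_subset_eball_trans
    rw [← hd, hR₃]; linarith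
  -- glog
  set glog : ℝ × ℝ → ℝ := fun p => Real.log M₀ - Real.log (f p) with hglog
  have hglogV : ContDiffOn ℝ ∞ glog (eball x₀ (2 * ρ)) := by
    apply ContDiffOn.sub contDiffOn_const
    exact ((hsmooth.of_le (by simp)).mono hVU).log (fun x hx => (hpos x (hVU hx)).ne')
  have hglogContU : ContinuousOn glog U :=
    continuousOn_const.sub ((hsmooth.continuousOn).log (fun x hx => (hpos x hx).ne'))
  -- smooth cutoff
  set χ : ℝ × ℝ → ℝ := fun p =>
    Real.smoothTransition ((R₃ ^ 2 - ((p.1 - y₀.1) ^ 2 + (p.2 - y₀.2) ^ 2)) / (R₃ ^ 2 - R₂ ^ 2))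
    with hχ
  have hden : 0 < R₃ ^ 2 - R₂ ^ 2 := by nlinarith
  have hχsmooth : ContDiff ℝ ∞ χ := by
    apply Real.smoothTransition.contDiff.comp
    apply ContDiff.div_const
    apply ContDiff.sub contDiff_const
    exact ((contDiff_fst.sub contDiff_const).pow 2).add ((contDiff_snd.sub contDiff_const).pow 2)
  have hqn : ∀ p : ℝ × ℝ, (p.1 - y₀.1) ^ 2 + (p.2 - y₀.2) ^ 2 = enorm2 (p - y₀) ^ 2 := by
    intro p
    rw [enorm2, sq_sqrt (by positivity)]
    rfl
  have hχ1 : ∀ p : ℝ × ℝ, enorm2 (p - y₀) ≤ R₂ → χ p = 1 := by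
    intro p hp
    apply Real.smoothTransition.one_of_one_le
    rw [le_div_iff₀ hden, one_mul, hqn]
    nlinarith [enorm2_nonneg (p - y₀)]
  have hχ0 : ∀ p : ℝ × ℝ, R₃ ≤ enorm2 (p - y₀) → χ p = 0 := by
    intro p hp
    apply Real.smoothTransition.zero_of_nonpos
    apply div_nonpos_of_nonpos_of_nonneg _ hden.le
    rw [hqn]
    nlinarith [enorm2_nonneg (p - y₀)]
  -- the auxiliary global function
  set quad : ℝ × ℝ → ℝ := fun p => (M₀ / (4 * t₁)) * ((p.1 - y₀.1) ^ 2 + (p.2 - y₀.2) ^ 2)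
    with hquad
  have hquadsmooth : ContDiff ℝ ∞ quad :=
    contDiff_const.mul
      (((contDiff_fst.sub contDiff_const).pow 2).add ((contDiff_snd.sub contDiff_const).pow 2))
  set G : ℝ × ℝ → ℝ := fun p => χ p * glog p with hG
  have hGsmooth : ContDiff ℝ ∞ G := by
    rw [contDiff_iff_contDiffAt]
    intro x
    by_cases hx : x ∈ eball x₀ (2 * ρ)
    · exact ((hχsmooth.contDiffOn.mul hglogV).contDiffAt (hVopen.mem_nhds hx))
    · have hx3 : R₃ < enorm2 (x - y₀) := by
        by_contra hle
        exact hx (hsubV (show enorm2 (x - y₀) ≤ R₃ from not_lt.mp hle))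
      have hOopen : IsOpen {p : ℝ × ℝ | R₃ < enorm2 (p - y₀)} :=
        isOpen_lt continuous_const (continuous_enorm2.comp (continuous_id.sub continuous_const))
      have hev : G =ᶠ[nhds x] (fun _ => (0:ℝ)) := by
        filter_upwards [hOopen.mem_nhds hx3] with p hp
        show χ p * glog p = 0
        rw [hχ0 p (le_of_lt hp), zero_mul]
      exact (contDiffAt_const (c := (0:ℝ))).congr_of_eventuallyEq hev
  set H : ℝ × ℝ → ℝ := fun p => G p + quad p with hHdef
  have hHsmooth : ContDiff ℝ ∞ H := hGsmooth.add hquadsmooth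
  have hHeq : ∀ p ∈ eball y₀ R₂, H p = glog p + quad p := by
    intro p hp
    show χ p * glog p + quad p = glog p + quad p
    rw [hχ1 p (le_of_lt hp), one_mul]
  have hR₂V : eball y₀ R₂ ⊆ eball x₀ (2 * ρ) := fun p hp =>
    hsubV (show enorm2 (p - y₀) ≤ R₃ from le_of_lt (lt_trans hp hR₂R₃))
  -- Laplacian is nonnegative on the closed ball
  have hlapH : ∀ x ∈ ecball y₀ ρ, 0 ≤ lap H x := by
    intro x hx
    have hxW : x ∈ eball y₀ R₂ := lt_of_le_of_lt hx hρR₂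
    have hxV : x ∈ eball x₀ (2 * ρ) := hR₂V hxW
    have hxU : x ∈ U := hVU hxV
    have hev : H =ᶠ[nhds x] (fun p => glog p + quad p) := by
      filter_upwards [(isOpen_eball y₀ R₂).mem_nhds hxW] with p hp
      exact hHeq p hp
    rw [lap_congr hev, lap_add hVopen hglogV hquadsmooth.contDiffOn hxV]
    have h1 : lap glog x = - lap (fun q => Real.log (f q)) x := by
      rw [hglog]; exact lap_const_sub _ _ _
    have h2 : lap quad x = 4 * (M₀ / (4 * t₁)) := by
      rw [hquad]; exact lap_quad _ _ _ _
    have h3 := hcurv x hxU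
    have h4 : f x ≤ M₀ := hupper x hxV
    have h5 : f x / t₁ ≤ M₀ / t₁ := by gcongr
    have h6 : 4 * (M₀ / (4 * t₁)) = M₀ / t₁ := by field_simp
    rw [h1, h2, h6]
    linarith
  -- sub-mean-value inequality
  have hsm := submean hHsmooth y₀ hρ hlapH
  have hy₀self : y₀ ∈ eball y₀ ρ := by
    show enorm2 (y₀ - y₀) < ρ
    simp [enorm2]
    exact hρ
  have hy₀U : y₀ ∈ U := hVU (hR₂V (lt_trans hy₀self hρR₂))
  have hHy₀ : H y₀ = glog y₀ := by
    have h1 : χ y₀ = 1 := hχ1 y₀ (by simp [enorm2]; positivity)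
    have h2 : quad y₀ = 0 := by show (M₀/(4*t₁)) * _ = 0; simp
    show χ y₀ * glog y₀ + quad y₀ = glog y₀
    rw [h1, h2, one_mul, add_zero]
  -- integrability
  have hglogIntBig : IntegrableOn glog (eball x₀ (2*ρ)) := by
    have hib : IntegrableOn glog (ecball x₀ (2*ρ)) :=
      (hglogContU.mono hball).integrableOn_compact (isCompact_ecball _ _)
    exact hib.mono_set (eball_subset_ecball _ _)
  have hsmall : eball y₀ ρ ⊆ eball x₀ (2*ρ) := fun p hp =>
    hR₂V (show enorm2 (p - y₀) < R₂ from lt_trans hp hρR₂)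
  have hglogInt : IntegrableOn glog (eball y₀ ρ) := hglogIntBig.mono_set hsmall
  have hquadInt : IntegrableOn quad (eball y₀ ρ) :=
    (hquadsmooth.continuous.continuousOn.integrableOn_compact
      (isCompact_ecball y₀ ρ)).mono_set (eball_subset_ecball _ _)
  have hIeq : ∫ x in eball y₀ ρ, H x
      = (∫ x in eball y₀ ρ, glog x) + ∫ x in eball y₀ ρ, quad x := by
    rw [setIntegral_congr_fun (measurableSet_eball' _ _)
      (fun p hp => hHeq p (lt_trans hp hρR₂))]
    exact integral_add hglogInt hquadInt
  -- value of the quadratic integral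
  have hquadval : ∫ x in eball y₀ ρ, quad x = M₀ / (4*t₁) * (π * ρ^4 / 2) := by
    have hqnc : Continuous fun p : ℝ × ℝ => (p.1 - y₀.1) ^ 2 + (p.2 - y₀.2) ^ 2 := by fun_prop
    obtain ⟨hq1, _⟩ := polar_integral hqnc y₀ hρ
    have hval : ∫ x in eball y₀ ρ, quad x
        = M₀ / (4*t₁) * ∫ x in eball y₀ ρ, ((x.1 - y₀.1) ^ 2 + (x.2 - y₀.2) ^ 2) := by
      rw [hquad]; exact integral_const_mul _ _
    rw [hval, hq1]
    have hinner : ∀ r ∈ Ioo (0:ℝ) ρ,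
        (fun r => r * ∫ θ in Ioo (-π) π,
          (((y₀ + r • ((cos θ, sin θ) : ℝ × ℝ)).1 - y₀.1) ^ 2
            + ((y₀ + r • ((cos θ, sin θ) : ℝ × ℝ)).2 - y₀.2) ^ 2)) r
        = (fun r : ℝ => 2 * π * r ^ 3) r := by
      intro r _
      show r * (∫ θ in Ioo (-π) π,
          (((y₀ + r • ((cos θ, sin θ) : ℝ × ℝ)).1 - y₀.1) ^ 2
            + ((y₀ + r • ((cos θ, sin θ) : ℝ × ℝ)).2 - y₀.2) ^ 2)) = 2 * π * r ^ 3
      have hptwise : ∀ θ ∈ Ioo (-π) π,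
          (((y₀ + r • ((cos θ, sin θ) : ℝ × ℝ)).1 - y₀.1) ^ 2
            + ((y₀ + r • ((cos θ, sin θ) : ℝ × ℝ)).2 - y₀.2) ^ 2) = r ^ 2 := by
        intro θ _
        have e1 : (y₀ + r • ((cos θ, sin θ) : ℝ × ℝ)).1 = y₀.1 + r * cos θ := by
          simp [Prod.smul_mk, smul_eq_mul]
        have e2 : (y₀ + r • ((cos θ, sin θ) : ℝ × ℝ)).2 = y₀.2 + r * sin θ := by
          simp [Prod.smul_mk, smul_eq_mul]
        rw [e1, e2]
        linear_combination (r^2) * sin_sq_add_cos_sq θ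
      rw [setIntegral_congr_fun measurableSet_Ioo hptwise, setIntegral_const]
      rw [Real.volume_real_Ioo_of_le (by linarith [pi_pos])]
      rw [smul_eq_mul]
      ring
    rw [setIntegral_congr_fun measurableSet_Ioo hinner]
    have : ∫ r in Ioo (0:ℝ) ρ, 2 * π * r ^ 3 = 2 * π * ∫ r in Ioo (0:ℝ) ρ, r ^ 3 :=
      integral_const_mul _ _
    have h4 : (∫ x in (0:ℝ)..ρ, x ^ 3) = ρ ^ 4 / 4 := by
      rw [integral_pow]; norm_num
    rw [this, ← integral_Ioc_eq_integral_Ioo, ← intervalIntegral.integral_of_le hρ.le, h4]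
    ring
  -- monotonicity of the glog integral
  have hmono : ∫ x in eball y₀ ρ, glog x ≤ ∫ x in eball x₀ (2*ρ), glog x := by
    apply setIntegral_mono_set hglogIntBig ?_ (HasSubset.Subset.eventuallyLE hsmall)
    filter_upwards [ae_restrict_mem (measurableSet_eball' x₀ (2*ρ))] with p hp
    show (0:ℝ) ≤ Real.log M₀ - Real.log (f p)
    have := Real.log_le_log (hpos p (hVU hp)) (hupper p hp)
    linarith
  -- rewrite the goal in terms of glog
  have hAeq : (∫ x in eball x₀ (2*ρ), Real.log (M₀ / f x)) = ∫ x in eball x₀ (2*ρ), glog x := by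
    apply setIntegral_congr_fun (measurableSet_eball' _ _)
    intro p hp
    show Real.log (M₀ / f p) = Real.log M₀ - Real.log (f p)
    rw [Real.log_div hM₀.ne' (hpos p (hVU hp)).ne']
  have hgy₀ : Real.log (M₀ / f y₀) = glog y₀ :=
    Real.log_div hM₀.ne' (hpos y₀ hy₀U).ne'
  rw [hgy₀, hAeq]
  have key : π * ρ ^ 2 * glog y₀
      ≤ (∫ x in eball x₀ (2*ρ), glog x) + M₀/(4*t₁) * (π * ρ^4/2) := by
    rw [hHy₀, hIeq, hquadval] at hsm
    linarith
  have hπρ : 0 < π * ρ ^ 2 := by positivity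
  have hrw : 4 * ((π * (2*ρ)^2)⁻¹ * ∫ x in eball x₀ (2*ρ), glog x) + ρ^2*M₀/(8*t₁)
      = ((∫ x in eball x₀ (2*ρ), glog x) + M₀/(4*t₁) * (π * ρ^4/2)) / (π * ρ^2) := by
    have h1 : π ≠ 0 := pi_ne_zero
    have h2 : ρ ≠ 0 := hρ.ne'
    have h3 : t₁ ≠ 0 := ht₁.ne'
    field_simp
    ring
  rw [hrw, le_div_iff₀ hπρ, mul_comm]
  exact key

end
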